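/- arXiv:0903.3032 — 5 statements merged into one kernel-verified Lean document; each statement's English description precedes it below -/
import Mathlib

section
/- Let E be a field equipped with an action of a finite group G by field automorphisms, and suppose the order of G is invertible in E. Then the skew group ring E⟨G⟩ (the E-vector space with basis G and multiplication (αg)(βh) = α·(g β)·gh) is a semisimple ring. -/
/-- A witness that the ring `R` is the skew group ring `E⟨G⟩` of the action of a
group `G` on a commutative ring `E`: `R` is free as an `E`-module with basis the
image of `G`, `E` embeds in `R`, and the multiplication satisfies the skew
commutation rule `g · α = (g α) · g`, which encodes `(αg)(βh) = α·(g β)·(gh)`. -/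
structure SkewGroupRing (E : Type*) (G : Type*) (R : Type*) [CommRing E] [Monoid G]
    [MulSemiringAction G E] [Ring R] [Module E R] where
  emb : E →+* R
  grp : G →* R
  smul_def : ∀ (a : E) (r : R), a • r = emb a * r
  basis : Module.Basis G E R
  basis_eq : ∀ g : G, basis g = grp g
  comm : ∀ (g : G) (a : E), grp g * emb a = emb (g • a) * grp g

/-!
As in Maschke's theorem, a left ideal `p` of `E⟨G⟩` has an `E`-linear projection `f`
onto it, since `E` is a field. Its average `x ↦ |G|⁻¹ ∑ g, g f (g⁻¹ x)` is again `E`-linear,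
because conjugating by `g` twists the scalars by `g` and back again, and it commutes with left
multiplication by `G`. As `E⟨G⟩` is spanned by `G` over `E`, it is an `E⟨G⟩`-linear projection
onto `p`, whose kernel is a complement of `p`.
-/

open Finset

section GroupAverage

variable {R M G : Type*} [Ring R] [AddCommGroup M] [Module R M] [Group G] [Fintype G]

def groupAverage (ρ : G →* R) (f : M → M) (x : M) : M :=
  ∑ g : G, ρ g • f (ρ g⁻¹ • x)

variable (ρ : G →* R)

theorem groupAverage_add (f : M →+ M) (x y : M) :
    groupAverage ρ f (x + y) = groupAverage ρ f x + groupAverage ρ f y := by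
  simp only [groupAverage, smul_add, map_add, sum_add_distrib]

theorem groupAverage_hom_smul (f : M → M) (h : G) (x : M) :
    groupAverage ρ f (ρ h • x) = ρ h • groupAverage ρ f x := by
  rw [groupAverage, groupAverage, smul_sum, ← Equiv.sum_comp (Equiv.mulLeft h)]
  refine sum_congr rfl fun k _ => ?_
  simp only [Equiv.coe_mulLeft, mul_inv_rev, map_mul, mul_smul]
  rw [← mul_smul (ρ h⁻¹), ← map_mul, inv_mul_cancel, map_one, one_smul]

theorem groupAverage_mem {f : M → M} {p : Submodule R M} (hf : ∀ x, f x ∈ p) (x : M) :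
    groupAverage ρ f x ∈ p :=
  p.sum_mem fun g _ => p.smul_mem (ρ g) (hf _)

theorem groupAverage_eq_card_smul {f : M → M} {p : Submodule R M} (hf : ∀ x ∈ p, f x = x)
    {x : M} (hx : x ∈ p) : groupAverage ρ f x = Fintype.card G • x := by
  have hterm : ∀ g : G, ρ g • f (ρ g⁻¹ • x) = x := fun g => by
    rw [hf _ (p.smul_mem _ hx), ← mul_smul, ← map_mul, mul_inv_cancel, map_one, one_smul]
  simp only [groupAverage, hterm, sum_const, card_univ]

end GroupAverage

namespace SkewGroupRing

variable {E G R : Type*} [CommRing E] [Group G] [MulSemiringAction G E] [Ring R] [Module E R]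

theorem isScalarTower (S : SkewGroupRing E G R) : IsScalarTower E R R :=
  ⟨fun a r s => by simp only [smul_eq_mul, S.smul_def, mul_assoc]⟩

variable (S : SkewGroupRing E G R)

theorem grp_mul_smul (g : G) (a : E) (x : R) : S.grp g * (a • x) = (g • a) • (S.grp g * x) := by
  rw [S.smul_def, S.smul_def, ← mul_assoc, ← mul_assoc, S.comm]

theorem map_mul_of_map_grp_mul (φ : R →ₗ[E] R) (hφ : ∀ g x, φ (S.grp g * x) = S.grp g * φ x)
    (r x : R) : φ (r * x) = r * φ x := by
  have := S.isScalarTower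
  have h : φ ∘ₗ LinearMap.mulRight E x = LinearMap.mulRight E (φ x) :=
    S.basis.ext fun g => by simp [S.basis_eq, hφ]
  exact LinearMap.congr_fun h r

variable [Fintype G]

theorem groupAverage_smul (f : R →ₗ[E] R) (a : E) (x : R) :
    groupAverage S.grp f (a • x) = a • groupAverage S.grp f x := by
  simp only [groupAverage, smul_eq_mul, smul_sum, S.grp_mul_smul, map_smul, smul_inv_smul]

theorem groupAverage_smul_left (f : R →ₗ[E] R) {a : E} (ha : ∀ g : G, g • a = a) (x : R) :
    groupAverage S.grp (a • f) x = a • groupAverage S.grp f x := by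
  simp only [groupAverage, LinearMap.smul_apply, smul_eq_mul, S.grp_mul_smul, ha, smul_sum]

def average (f : R →ₗ[E] R) : R →ₗ[R] R where
  toFun := groupAverage S.grp f
  map_add' := groupAverage_add S.grp f.toAddMonoidHom
  map_smul' := S.map_mul_of_map_grp_mul
    { toFun := groupAverage S.grp f
      map_add' := groupAverage_add S.grp f.toAddMonoidHom
      map_smul' := S.groupAverage_smul f }
    (groupAverage_hom_smul S.grp f)

end SkewGroupRing

theorem SkewGroupRing.exists_retraction {E G R : Type*} [Field E] [Group G] [Fintype G]
    [MulSemiringAction G E] [Ring R] [Module E R] (S : SkewGroupRing E G R)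
    (hcard : (Fintype.card G : E) ≠ 0) (p : Submodule R R) :
    ∃ π : R →ₗ[R] p, ∀ x : p, π x = x := by
  have := S.isScalarTower
  let pE := p.restrictScalars E
  obtain ⟨q, hq⟩ := pE.exists_isCompl
  set c : E := (Fintype.card G : E)⁻¹
  have hc : ∀ g : G, g • c = c := fun g => by
    rw [smul_inv'', ← MulSemiringAction.toRingHom_apply, map_natCast]
  let f := pE.projection q hq
  have hmem : ∀ x, S.average (c • f) x ∈ p :=
    groupAverage_mem S.grp fun x => pE.smul_mem c (pE.projection_apply_mem hq x)
  refine ⟨(S.average (c • f)).codRestrict p hmem, fun ⟨x, hx⟩ => Subtype.ext ?_⟩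
  calc S.average (c • f) x = c • groupAverage S.grp f x := S.groupAverage_smul_left f hc x
    _ = c • (Fintype.card G • x) := by
      rw [groupAverage_eq_card_smul S.grp (fun _ => pE.projection_apply_of_mem_left hq) hx]
    _ = x := by rw [← Nat.cast_smul_eq_nsmul E, smul_smul, inv_mul_cancel₀ hcard, one_smul]

/-- Maschke for skew group rings: if a finite group `G` acts on a
field `E` by field automorphisms and `|G|` is invertible in `E`, then the skew group
ring `E⟨G⟩` is a semisimple ring. -/
theorem skewGroupRing_isSemisimpleRing
    (E G R : Type*) [Field E] [Group G] [Fintype G] [MulSemiringAction G E]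
    [Ring R] [Module E R] (S : SkewGroupRing E G R)
    (hcard : (Fintype.card G : E) ≠ 0) :
    IsSemisimpleRing R := by
  refine { exists_isCompl := fun p => ?_ }
  obtain ⟨π, hπ⟩ := S.exists_retraction hcard p
  exact ⟨LinearMap.ker π, LinearMap.isCompl_of_proj hπ⟩
end

section
/- Let E be a field with a faithful action of a finite group G. Then the skew group ring E⟨G⟩ is isomorphic as a ring to the matrix ring M_n(F), where F = E^G is the fixed field and n = [E : F]. -/
/-! The `E`-linear map `E⟨G⟩ → End_F(E)` sending `g` to `x ↦ g • x` is a ring isomorphism.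
By Dedekind's independence of characters the maps `x ↦ g • x` are `E`-linearly independent in
`End_F(E)`, and by Artin there are `|G| = [E : F] = dim_E End_F(E)` of them, so they form an
`E`-basis. Both rings multiply `E`-multiples of basis elements by the same rule
`(a g)(b h) = (a · g b)(g h)`, so matching the two bases gives a ring isomorphism, and
`End_F(E) ≃ M_n(F)`. -/

open Module

theorem Module.Basis.map_mul_of_smul_mul_smul {ι E R A : Type*} [Fintype ι] [Semiring E]
    [NonUnitalNonAssocSemiring R] [Module E R] [NonUnitalNonAssocSemiring A]
    (b : Basis ι E R) (f : R →+ A)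
    (h : ∀ (a c : E) (i j : ι), f ((a • b i) * (c • b j)) = f (a • b i) * f (c • b j))
    (r s : R) : f (r * s) = f r * f s := by
  rw [← b.sum_repr r, ← b.sum_repr s, Finset.sum_mul_sum]
  simp only [map_sum, h, Finset.sum_mul_sum]

namespace FixedPoints

variable (G E : Type*) [Group G] [Fintype G] [Field E] [MulSemiringAction G E] [FaithfulSMul G E]

noncomputable def basisEnd : Basis G E (End (subfield G E) E) :=
  basisOfLinearIndependentOfCardEqFinrank
    ((linearIndependent_toLinearMap (subfield G E) E E).comp _
      (MulSemiringAction.toAlgHom_injective _ E))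
    (by rw [finrank_linearMap_self, finrank_eq_card])

variable {G E}

theorem basisEnd_apply (g : G) (x : E) : basisEnd G E g x = g • x := by
  simp [basisEnd]

theorem smul_basisEnd_mul_smul_basisEnd (a b : E) (g h : G) :
    (a • basisEnd G E g) * (b • basisEnd G E h) = (a * g • b) • basisEnd G E (g * h) := by
  ext x
  simp only [End.mul_apply, LinearMap.smul_apply, basisEnd_apply, smul_eq_mul, mul_smul,
    smul_mul']

end FixedPoints

namespace SkewGroupRing

theorem smul_basis_mul_smul_basis {E G R : Type*} [CommRing E] [Monoid G]
    [MulSemiringAction G E] [Ring R] [Module E R] (S : SkewGroupRing E G R) (a b : E) (g h : G) :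
    (a • S.basis g) * (b • S.basis h) = (a * g • b) • S.basis (g * h) := by
  simp only [S.smul_def, S.basis_eq, map_mul]
  calc S.emb a * S.grp g * (S.emb b * S.grp h)
      = S.emb a * (S.grp g * S.emb b) * S.grp h := by noncomm_ring
    _ = S.emb a * S.emb (g • b) * (S.grp g * S.grp h) := by rw [S.comm]; noncomm_ring

noncomputable def ringEquivEnd {E G R : Type*} [Field E] [Group G] [Fintype G]
    [MulSemiringAction G E] [FaithfulSMul G E] [Ring R] [Module E R] (S : SkewGroupRing E G R) :
    R ≃+* End (FixedPoints.subfield G E) E where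
  __ := S.basis.equiv (FixedPoints.basisEnd G E) (Equiv.refl G)
  map_mul' := S.basis.map_mul_of_smul_mul_smul
    (S.basis.equiv (FixedPoints.basisEnd G E) (Equiv.refl G)).toAddMonoidHom fun a b g h => by
      simp [smul_basis_mul_smul_basis, FixedPoints.smul_basisEnd_mul_smul_basisEnd]

end SkewGroupRing

/-- if a finite group `G` acts faithfully on a field `E`, then the
skew group ring `E⟨G⟩` is isomorphic as a ring to the matrix ring `M_n(F)`, where
`F = E^G` is the fixed field and `n = [E : F]`. -/
theorem skewGroupRing_faithful_iso_matrixRing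
    (E G R : Type*) [Field E] [Group G] [Fintype G] [MulSemiringAction G E]
    [FaithfulSMul G E] [Ring R] [Module E R] (S : SkewGroupRing E G R) :
    Nonempty (R ≃+*
      Matrix (Fin (Module.finrank (FixedPoints.subfield G E) E))
        (Fin (Module.finrank (FixedPoints.subfield G E) E))
        (FixedPoints.subfield G E)) :=
  ⟨S.ringEquivEnd.trans (algEquivMatrix (Module.finBasis _ E)).toRingEquiv⟩
end

section
/- Let E be a field with an action of a finite group G whose order is invertible in E, let N be the (normal) subgroup of elements acting trivially on E, assume N is abelian, and let F = E^G. Then the map μ : E ⊗_F Z → E[N] defined by e ⊗ z ↦ ez, where Z is the center of the skew group ring E⟨G⟩, is an isomorphism of E-algebras. -/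
open scoped TensorProduct

theorem Finsupp.support_mapRange_smul_sub_subset {ι E M : Type*} [DecidableEq ι] [Ring E] [Monoid M]
    [MulSemiringAction M E] (g : M) {l : ι →₀ E} {i₀ : ι} (hl : l i₀ = 1) :
    (l.mapRange (g • ·) (smul_zero g) - l).support ⊆ l.support.erase i₀ := by
  intro i hi
  have hdi : g • l i - l i ≠ 0 := Finsupp.mem_support_iff.mp hi
  refine Finset.mem_erase.mpr ⟨?_, Finsupp.mem_support_iff.mpr fun h0 => ?_⟩
  · rintro rfl
    simp [hl] at hdi
  · simp [h0] at hdi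

theorem LinearIndependent.of_fixedPoints_subfield {ι E V M : Type*} [Field E] [AddCommGroup V]
    [Module E V] [Monoid M] [MulSemiringAction M E] (σ : M → V →+ V)
    (hσ : ∀ g (e : E) x, σ g (e • x) = (g • e) • σ g x) {v : ι → V}
    (hfix : ∀ g i, σ g (v i) = v i) (hv : LinearIndependent (FixedPoints.subfield M E) v) :
    LinearIndependent E v := by
  classical
  have hσv : ∀ g (l : ι →₀ E),
      Finsupp.linearCombination E v (l.mapRange (g • ·) (smul_zero g)) =
        σ g (Finsupp.linearCombination E v l) := by
    intro g l
    simp only [Finsupp.linearCombination_apply, map_finsuppSum, hσ, hfix]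
    exact Finsupp.sum_mapRange_index fun i => zero_smul E (v i)
  rw [linearIndependent_iff]
  suffices H : ∀ n (l : ι →₀ E), l.support.card = n →
      Finsupp.linearCombination E v l = 0 → l = 0 from fun l => H _ l rfl
  intro n
  induction n using Nat.strong_induction_on with
  | _ n IH =>
  intro l hn hl
  by_contra hne
  obtain ⟨i₀, hi₀⟩ := Finsupp.support_nonempty_iff.mpr hne
  have hli₀ : l i₀ ≠ 0 := Finsupp.mem_support_iff.mp hi₀
  set l' := (l i₀)⁻¹ • l
  have hl'i₀ : l' i₀ = 1 := inv_mul_cancel₀ hli₀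
  have hl'_supp : l'.support = l.support := Finsupp.support_smul_eq (inv_ne_zero hli₀)
  have hl' : Finsupp.linearCombination E v l' = 0 := by rw [map_smul, hl, smul_zero]
  -- by minimality of the support, the relation `g • l' - l'` vanishes
  have hl'_fixed : ∀ (g : M) i, g • l' i = l' i := by
    intro g
    have hcard : (l'.mapRange (g • ·) (smul_zero g) - l').support.card < n := by
      rw [← hn, ← hl'_supp]
      exact (Finset.card_le_card (Finsupp.support_mapRange_smul_sub_subset g hl'i₀)).trans_lt
        (Finset.card_erase_lt_of_mem (hl'_supp ▸ hi₀))
    have hd := IH _ hcard _ rfl (by rw [map_sub, hσv, hl', map_zero, sub_zero])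
    exact fun i => sub_eq_zero.mp (DFunLike.congr_fun hd i)
  have := linearIndependent_iff'.mp hv l'.support (fun i => ⟨l' i, fun g => hl'_fixed g i⟩)
    hl' i₀ (hl'_supp ▸ hi₀)
  exact one_ne_zero (hl'i₀.symm.trans (congrArg Subtype.val this))

theorem MonoidHom.fiber_sum_eq_zero_of_sum_mul_eq_zero {ι G L : Type*} [Fintype ι]
    [MulOneClass G] [CommRing L] [IsDomain L] [DecidableEq (G →* L)] (χ : ι → G →* L)
    (c : ι → L) (h : ∀ x, ∑ i, c i * χ i x = 0) (i₀ : ι) : ∑ i with χ i = χ i₀, c i = 0 := by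
  have hχ : ∀ i ∈ Finset.univ, χ i ∈ Finset.univ.image χ := fun i _ =>
    Finset.mem_image_of_mem χ (Finset.mem_univ i)
  have hsum : ∑ φ ∈ Finset.univ.image χ, (∑ i with χ i = φ, c i) • (φ : G → L) = 0 := by
    funext x
    simp only [Finset.sum_apply, Pi.smul_apply, smul_eq_mul, Finset.sum_mul, Pi.zero_apply]
    rw [← h x, ← Finset.sum_fiberwise_of_maps_to hχ]
    refine Finset.sum_congr rfl fun φ _ => Finset.sum_congr rfl fun i hi => ?_
    rw [(Finset.mem_filter.mp hi).2]
  exact linearIndependent_iff'.mp (linearIndependent_monoidHom G L) _ _ hsum (χ i₀)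
    (hχ i₀ (Finset.mem_univ i₀))

section TensorCenter

variable {K E R : Type*} [CommRing K] [CommRing E] [Algebra K E] [Ring R] [Module K R]
  [Algebra K (Subring.center R)] {emb : E →+* R} {μ : E ⊗[K] Subring.center R →ₗ[K] R}

theorem map_mul_of_map_tmul_eq_emb_mul (hμ : ∀ e z, μ (e ⊗ₜ z) = emb e * (z : R))
    (a b : E ⊗[K] Subring.center R) : μ (a * b) = μ a * μ b := by
  induction a using TensorProduct.induction_on with
  | zero => rw [zero_mul, map_zero, zero_mul]
  | add a₁ a₂ h₁ h₂ => rw [add_mul, map_add, map_add, add_mul, h₁, h₂]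
  | tmul e z =>
    induction b using TensorProduct.induction_on with
    | zero => rw [mul_zero, map_zero, mul_zero]
    | add b₁ b₂ h₁ h₂ => rw [mul_add, map_add, map_add, mul_add, h₁, h₂]
    | tmul e' z' =>
      rw [Algebra.TensorProduct.tmul_mul_tmul, hμ, hμ, hμ, map_mul, Subring.coe_mul,
        mul_assoc, mul_assoc, ← mul_assoc (z : R), ← Subring.mem_center_iff.mp z.2 (emb e'),
        mul_assoc]

theorem map_smul_of_map_tmul_eq_emb_mul (hμ : ∀ e z, μ (e ⊗ₜ z) = emb e * (z : R))
    (e : E) (t : E ⊗[K] Subring.center R) : μ (e • t) = emb e * μ t := by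
  induction t using TensorProduct.induction_on with
  | zero => rw [smul_zero, map_zero, mul_zero]
  | add t₁ t₂ h₁ h₂ => rw [smul_add, map_add, map_add, mul_add, h₁, h₂]
  | tmul e' z => rw [TensorProduct.smul_tmul', hμ, hμ, smul_eq_mul, map_mul, mul_assoc]

end TensorCenter

namespace SkewGroupRing

variable {E G R : Type*} [Field E] [Group G] [MulSemiringAction G E] [Ring R] [Module E R]

section

variable (S : SkewGroupRing E G R)

theorem commute_emb_grp_of_mem_ker {m : G} (hm : m ∈ (MulSemiringAction.toRingAut G E).ker)
    (a : E) : Commute (S.emb a) (S.grp m) := by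
  have : m • a = a := DFunLike.congr_fun (MonoidHom.mem_ker.mp hm) a
  rw [Commute, SemiconjBy, S.comm, this]

theorem grp_mul_smul_mul_grp_inv (g : G) (e : E) (x : R) :
    S.grp g * (e • x) * S.grp g⁻¹ = (g • e) • (S.grp g * x * S.grp g⁻¹) := by
  rw [S.smul_def, S.smul_def, ← mul_assoc, S.comm, mul_assoc, mul_assoc, mul_assoc]

theorem repr_emb_mul (a : E) (x : R) (g : G) :
    S.basis.repr (S.emb a * x) g = a * S.basis.repr x g := by
  rw [← S.smul_def, map_smul, Finsupp.smul_apply, smul_eq_mul]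

end

theorem linearIndependent_of_mem_center (S : SkewGroupRing E G R) {ι : Type*} {v : ι → R}
    (hv : ∀ i, v i ∈ Subring.center R) (hli : LinearIndependent (FixedPoints.subfield G E) v) :
    LinearIndependent E v := by
  refine hli.of_fixedPoints_subfield
    (fun g => (AddMonoidHom.mulRight (S.grp g⁻¹)).comp (AddMonoidHom.mulLeft (S.grp g)))
    (fun g e x => S.grp_mul_smul_mul_grp_inv g e x) fun g i => ?_
  change S.grp g * v i * S.grp g⁻¹ = v i
  rw [Subring.mem_center_iff.mp (hv i), mul_assoc, map_mul_eq_one S.grp (mul_inv_cancel g),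
    mul_one]

variable (S : SkewGroupRing E G R)

theorem range_eq_span_center {K : Type*} [CommRing K] [Algebra K E]
    [Module K R] [Algebra K (Subring.center R)] {μ : E ⊗[K] Subring.center R →ₗ[K] R}
    (hμ : ∀ e z, μ (e ⊗ₜ z) = S.emb e * (z : R)) :
    (LinearMap.range μ : Set R) = Submodule.span E (Subring.center R : Set R) := by
  ext x
  constructor
  · rintro ⟨t, rfl⟩
    induction t using TensorProduct.induction_on with
    | zero => rw [map_zero]; exact Submodule.zero_mem _
    | add u v hu hv => rw [map_add]; exact Submodule.add_mem _ hu hv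
    | tmul e z =>
      rw [hμ, ← S.smul_def]
      exact Submodule.smul_mem _ _ (Submodule.subset_span z.2)
  · intro hx
    induction hx using Submodule.span_induction with
    | mem z hz => exact ⟨1 ⊗ₜ ⟨z, hz⟩, by rw [hμ, map_one, one_mul]⟩
    | zero => exact ⟨0, map_zero μ⟩
    | add x y _ _ hx hy =>
      obtain ⟨tx, rfl⟩ := hx
      obtain ⟨ty, rfl⟩ := hy
      exact ⟨tx + ty, map_add μ tx ty⟩
    | smul e x _ hx =>
      obtain ⟨t, rfl⟩ := hx
      exact ⟨e • t, by rw [map_smul_of_map_tmul_eq_emb_mul hμ, S.smul_def]⟩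

theorem injective_of_map_tmul_eq_emb_mul [Algebra (FixedPoints.subfield G E) (Subring.center R)]
    (halg : ∀ f : FixedPoints.subfield G E,
      (algebraMap (FixedPoints.subfield G E) (Subring.center R) f : R) = S.emb f)
    {μ : E ⊗[FixedPoints.subfield G E] Subring.center R →ₗ[FixedPoints.subfield G E] R}
    (hμ : ∀ e z, μ (e ⊗ₜ z) = S.emb e * (z : R)) : Function.Injective μ := by
  let b := Module.Basis.ofVectorSpace (FixedPoints.subfield G E) (Subring.center R)
  let incl : Subring.center R →ₗ[FixedPoints.subfield G E] R :=
    { toFun := Subtype.val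
      map_add' := fun _ _ => rfl
      map_smul' := fun f z => by
        change ((f • z : Subring.center R) : R) = (f : E) • (z : R)
        rw [Algebra.smul_def, Subring.coe_mul, halg, S.smul_def] }
  have hb : LinearIndependent E fun i => (b i : R) :=
    S.linearIndependent_of_mem_center (fun i => (b i).2)
      (b.linearIndependent.map' incl (LinearMap.ker_eq_bot.mpr Subtype.val_injective))
  let μE : E ⊗[FixedPoints.subfield G E] Subring.center R →ₗ[E] R :=
    { μ with
      map_smul' := fun e t =>
        (map_smul_of_map_tmul_eq_emb_mul hμ e t).trans (S.smul_def e _).symm }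
  have hμE : μE = (Algebra.TensorProduct.basis E b).constr E fun i => (b i : R) :=
    (Algebra.TensorProduct.basis E b).ext fun i => by
      rw [Module.Basis.constr_basis, Algebra.TensorProduct.basis_apply]
      exact (hμ 1 (b i)).trans (by rw [map_one, one_mul])
  have := (Algebra.TensorProduct.basis E b).injective_constr_of_linearIndependent (R₂ := E) hb
  rwa [← hμE] at this

variable [Fintype G]

theorem mem_center_of_commute {x : R} (hemb : ∀ a : E, Commute (S.emb a) x)
    (hgrp : ∀ g : G, Commute (S.grp g) x) : x ∈ Subring.center R := by
  rw [Subring.mem_center_iff]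
  intro y
  rw [← S.basis.sum_repr y, Finset.sum_mul, Finset.mul_sum]
  refine Finset.sum_congr rfl fun g _ => ?_
  rw [S.basis_eq, S.smul_def, mul_assoc, (hgrp g).eq, ← mul_assoc, (hemb _).eq, mul_assoc]

theorem repr_mul_emb (x : R) (a : E) (g : G) :
    S.basis.repr (x * S.emb a) g = S.basis.repr x g * (g • a) := by
  have : x * S.emb a = ∑ h : G, (S.basis.repr x h * (h • a)) • S.basis h := by
    conv_lhs => rw [← S.basis.sum_repr x]
    rw [Finset.sum_mul]
    refine Finset.sum_congr rfl fun h _ => ?_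
    rw [S.basis_eq, S.smul_def, S.smul_def, mul_assoc, S.comm, ← mul_assoc, ← map_mul]
  rw [this, S.basis.repr_sum_self]

theorem repr_eq_zero_of_mem_center {z : R} (hz : z ∈ Subring.center R) {g : G}
    (hg : g ∉ (MulSemiringAction.toRingAut G E).ker) : S.basis.repr z g = 0 := by
  obtain ⟨a, ha⟩ : ∃ a : E, g • a ≠ a := by
    by_contra! h
    exact hg (MonoidHom.mem_ker.mpr (RingEquiv.ext h))
  have hcomm := congrArg (fun x => S.basis.repr x g) (Subring.mem_center_iff.mp hz (S.emb a))
  simp only [repr_emb_mul, repr_mul_emb] at hcomm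
  have : S.basis.repr z g * (g • a - a) = 0 := by rw [mul_sub, ← hcomm, mul_comm]; ring
  exact (mul_eq_zero.mp this).resolve_right (sub_ne_zero.mpr ha)

def conjSum (n : G) (e : E) : R := ∑ g : G, S.emb (g • e) * S.grp (g * n * g⁻¹)

theorem conjSum_mem_center {n : G} (hn : n ∈ (MulSemiringAction.toRingAut G E).ker) (e : E) :
    S.conjSum n e ∈ Subring.center R := by
  have hconj : ∀ g : G, g * n * g⁻¹ ∈ (MulSemiringAction.toRingAut G E).ker := fun g =>
    (MonoidHom.normal_ker _).conj_mem n hn g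
  refine S.mem_center_of_commute (fun a => ?_) (fun h => ?_)
  · refine Commute.sum_right _ _ _ fun g _ => ?_
    exact ((Commute.all a (g • e)).map S.emb).mul_right (S.commute_emb_grp_of_mem_ker (hconj g) a)
  · rw [Commute, SemiconjBy, conjSum, Finset.mul_sum, Finset.sum_mul]
    refine Fintype.sum_bijective (h * ·) (Group.mulLeft_bijective h) _ _ fun g => ?_
    rw [← mul_assoc, S.comm, mul_assoc, ← map_mul, mul_assoc (S.emb _), ← map_mul, smul_smul]
    congr 2
    group

theorem grp_mem_span_center (hcard : (Fintype.card G : E) ≠ 0) {n : G}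
    (hn : n ∈ (MulSemiringAction.toRingAut G E).ker)
    (hcomm : ∀ m ∈ (MulSemiringAction.toRingAut G E).ker, m * n = n * m) :
    S.grp n ∈ Submodule.span E (Subring.center R : Set R) := by
  classical
  set K := (MulSemiringAction.toRingAut G E).ker
  by_contra hnot
  obtain ⟨f, hfn, hf⟩ := Submodule.exists_dual_map_eq_bot_of_notMem hnot inferInstance
  have hf_center : ∀ z ∈ Subring.center R, f z = 0 := fun z hz =>
    (Submodule.mem_bot E).mp (hf ▸ Submodule.mem_map_of_mem (Submodule.subset_span hz))
  let χ : G → E →* E := fun g => MulSemiringAction.toRingHom G E g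
  have hχ : ∀ g, χ g = χ 1 ↔ g ∈ K := fun g => by
    rw [MonoidHom.mem_ker, RingEquiv.ext_iff, MonoidHom.ext_iff]; simp [χ]
  have hrel : ∀ e : E, ∑ g, f (S.grp (g * n * g⁻¹)) * χ g e = 0 := fun e => by
    rw [← hf_center _ (S.conjSum_mem_center hn e), conjSum, map_sum]
    refine Finset.sum_congr rfl fun g _ => ?_
    rw [← S.smul_def, map_smul, smul_eq_mul, mul_comm]
    rfl
  have hK := MonoidHom.fiber_sum_eq_zero_of_sum_mul_eq_zero χ _ hrel 1
  have hconst : ∀ g ∈ K, f (S.grp (g * n * g⁻¹)) = f (S.grp n) := fun g hg => by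
    rw [hcomm g hg, mul_inv_cancel_right]
  rw [Finset.filter_congr fun g _ => hχ g,
    Finset.sum_congr rfl fun g hg => hconst g (Finset.mem_filter.mp hg).2, Finset.sum_const,
    nsmul_eq_mul, ← Fintype.card_subtype, ← Nat.card_eq_fintype_card] at hK
  have hK_card : (Nat.card K : E) ≠ 0 :=
    ne_zero_of_dvd_ne_zero (by rwa [Nat.card_eq_fintype_card])
      (Nat.cast_dvd_cast (Subgroup.card_subgroup_dvd_card K))
  exact hfn ((mul_eq_zero.mp hK).resolve_left hK_card)

theorem span_center_eq_span_grp_ker (hcard : (Fintype.card G : E) ≠ 0)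
    (hab : ∀ a b : G, a ∈ (MulSemiringAction.toRingAut G E).ker →
      b ∈ (MulSemiringAction.toRingAut G E).ker → a * b = b * a) :
    Submodule.span E (Subring.center R : Set R) =
      Submodule.span E (S.grp '' ((MulSemiringAction.toRingAut G E).ker : Set G)) := by
  refine le_antisymm (Submodule.span_le.mpr fun z hz => ?_) (Submodule.span_le.mpr ?_)
  · rw [SetLike.mem_coe, ← S.basis.sum_repr z]
    refine Submodule.sum_mem _ fun g _ => ?_
    by_cases hg : g ∈ (MulSemiringAction.toRingAut G E).ker
    · exact Submodule.smul_mem _ _ (Submodule.subset_span ⟨g, hg, (S.basis_eq g).symm⟩)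
    · rw [S.repr_eq_zero_of_mem_center hz hg, zero_smul]
      exact Submodule.zero_mem _
  · rintro _ ⟨n, hn, rfl⟩
    exact S.grp_mem_span_center hcard hn fun m hm => hab m n hm hn

end SkewGroupRing

/-- let `E` be a field with an action of a finite group `G` whose order
is invertible in `E`, let `N` be the normal subgroup of elements acting trivially on `E`,
assume `N` is abelian, and let `F = E^G`.  Then the map `μ : E ⊗_F Z → E[N]`,
`e ⊗ z ↦ ez`, where `Z` is the center of the skew group ring `E⟨G⟩`, is an isomorphism
of `E`-algebras.  (Here `E[N]` is realized inside `E⟨G⟩` as the `E`-linear span of `N`;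
the map `μ` is multiplicative, injective, and has image exactly `E[N]`.) -/
theorem skewGroupRing_center_tensor_iso_groupAlgebra
    (E G R : Type*) [Field E] [Group G] [Fintype G] [MulSemiringAction G E]
    [Ring R] [Module E R] (S : SkewGroupRing E G R)
    (hcard : (Fintype.card G : E) ≠ 0)
    (N : Subgroup G) (hNdef : N = (MulSemiringAction.toRingAut G E).ker)
    (hNab : ∀ a b : G, a ∈ N → b ∈ N → a * b = b * a)
    [Algebra (FixedPoints.subfield G E) ↥(Subring.center R)]
    (halg : ∀ f : FixedPoints.subfield G E,
      ((algebraMap (FixedPoints.subfield G E) ↥(Subring.center R)) f : R) = S.emb (f : E))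
    (μ : E ⊗[FixedPoints.subfield G E] ↥(Subring.center R) →ₗ[FixedPoints.subfield G E] R)
    (hμ : ∀ (e : E) (z : ↥(Subring.center R)), μ (e ⊗ₜ z) = S.emb e * (z : R)) :
    Function.Injective μ ∧ (∀ a b, μ (a * b) = μ a * μ b) ∧
      (LinearMap.range μ : Set R) = ↑(Submodule.span E (⇑S.grp '' (N : Set G))) := by
  subst hNdef
  refine ⟨S.injective_of_map_tmul_eq_emb_mul halg hμ, map_mul_of_map_tmul_eq_emb_mul hμ, ?_⟩
  rw [← S.span_center_eq_span_grp_ker hcard hNab]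
  exact S.range_eq_span_center hμ
end

section
/- Let E be a field with an action of a finite group G of order invertible in E, with abelian kernel N, fixed field F = E^G, and fix a separable closure F̄ of F. For any finitely generated E⟨G⟩-module W, write F̄ ⊗_E W ≅ ⊕_{χ ∈ N^∨} U_χ^{m_χ} as a sum of one-dimensional N-representations, where N^∨ = Hom(N, F̄^×). Then the element ρ(W) = Σ m_χ χ ∈ ℤ[N^∨] is invariant under the action of the absolute Galois group G_F on ℤ[N^∨] given by (g * χ)(n) = g(χ(ḡ^{-1} n ḡ)). -/
open scoped TensorProduct

attribute [local instance] RingHomInvPair.of_ringEquiv RingHomInvPair.of_ringEquiv_symm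

theorem LinearEquiv.finrank_eq_of_semilinear {K K' M M' : Type*} [Semiring K] [Semiring K']
    [AddCommMonoid M] [AddCommMonoid M'] [Module K M] [Module K' M']
    {σ : K →+* K'} {σ' : K' →+* K} [RingHomInvPair σ σ'] [RingHomInvPair σ' σ]
    (e : M ≃ₛₗ[σ] M') : Module.finrank K M = Module.finrank K' M' := by
  have hσ : Function.Bijective σ := Function.bijective_iff_has_inverse.mpr
    ⟨σ', fun _ ↦ RingHomInvPair.comp_apply_eq, fun _ ↦ RingHomInvPair.comp_apply_eq₂⟩
  simpa only [Module.finrank, Cardinal.toNat_lift] using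
    congrArg Cardinal.toNat (lift_rank_eq_of_equiv_equiv σ e.toAddEquiv hσ e.map_smulₛₗ)

section SemilinearBaseChange

variable {E Ω W W' : Type*} [CommSemiring E] [CommSemiring Ω] [Algebra E Ω]
  [AddCommMonoid W] [AddCommMonoid W'] [Module E W] [Module E W'] {τ : E ≃+* E}

def RingEquiv.toSemilinearEquivOfAlgebraMap (σ : Ω ≃+* Ω)
    (hσ : ∀ e, σ (algebraMap E Ω e) = algebraMap E Ω (τ e)) : Ω ≃ₛₗ[(τ : E →+* E)] Ω :=
  { σ with map_smul' := fun e c ↦ by simp [Algebra.smul_def, hσ] }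

noncomputable def TensorProduct.semilinearCongr (σ : Ω ≃+* Ω)
    (hσ : ∀ e, σ (algebraMap E Ω e) = algebraMap E Ω (τ e)) (φ : W ≃ₛₗ[(τ : E →+* E)] W') :
    Ω ⊗[E] W ≃ₛₗ[(σ : Ω →+* Ω)] Ω ⊗[E] W' :=
  { TensorProduct.congr (RingEquiv.toSemilinearEquivOfAlgebraMap σ hσ) φ with
    map_smul' := fun c x ↦ by
      induction x using TensorProduct.induction_on with
      | zero => simp
      | tmul c' w => simp [TensorProduct.smul_tmul', RingEquiv.toSemilinearEquivOfAlgebraMap]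
      | add x y hx hy => simp_all }

@[simp]
theorem TensorProduct.semilinearCongr_tmul (σ : Ω ≃+* Ω)
    (hσ : ∀ e, σ (algebraMap E Ω e) = algebraMap E Ω (τ e)) (φ : W ≃ₛₗ[(τ : E →+* E)] W')
    (c : Ω) (w : W) : semilinearCongr σ hσ φ (c ⊗ₜ w) = σ c ⊗ₜ φ w := rfl

theorem TensorProduct.semilinearCongr_apply_comm (σ : Ω ≃+* Ω)
    (hσ : ∀ e, σ (algebraMap E Ω e) = algebraMap E Ω (τ e)) (φ : W ≃ₛₗ[(τ : E →+* E)] W')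
    {A : Module.End Ω (Ω ⊗[E] W)} {B : Module.End Ω (Ω ⊗[E] W')} {a : W → W} {b : W' → W'}
    (hA : ∀ c w, A (c ⊗ₜ w) = c ⊗ₜ a w) (hB : ∀ c w, B (c ⊗ₜ w) = c ⊗ₜ b w)
    (hab : ∀ w, φ (a w) = b (φ w)) (x : Ω ⊗[E] W) :
    semilinearCongr σ hσ φ (A x) = B (semilinearCongr σ hσ φ x) := by
  induction x using TensorProduct.induction_on with
  | zero => simp
  | tmul c w => rw [hA, semilinearCongr_tmul, semilinearCongr_tmul, hB, hab]
  | add x y hx hy => rw [map_add, map_add, hx, hy, map_add, map_add]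

end SemilinearBaseChange

theorem LinearEquiv.apply_mem_eigenspace_iff {K K' M M' : Type*} [CommRing K] [CommRing K']
    [AddCommGroup M] [AddCommGroup M'] [Module K M] [Module K' M']
    {σ : K →+* K'} {σ' : K' →+* K} [RingHomInvPair σ σ'] [RingHomInvPair σ' σ]
    (e : M ≃ₛₗ[σ] M') {A : Module.End K M} {B : Module.End K' M'}
    (hAB : ∀ x, e (A x) = B (e x)) (μ : K) (x : M) :
    e x ∈ B.eigenspace (σ μ) ↔ x ∈ A.eigenspace μ := by
  simp only [Module.End.mem_eigenspace_iff, ← hAB, ← e.map_smulₛₗ, e.injective.eq_iff]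

namespace SkewGroupRing

variable {E G R W : Type*} [CommRing E] [Group G] [MulSemiringAction G E] [Ring R] [Module E R]
  (S : SkewGroupRing E G R) [AddCommGroup W] [Module R W] [Module E W]

theorem grp_smul_smul (hEW : ∀ (e : E) (w : W), e • w = S.emb e • w) (g : G) (e : E) (w : W) :
    S.grp g • e • w = (g • e) • S.grp g • w := by
  rw [hEW, hEW, smul_smul, smul_smul, S.comm]

def grpSmulSemilinearEquiv (hEW : ∀ (e : E) (w : W), e • w = S.emb e • w) (g : G) :
    W ≃ₛₗ[(MulSemiringAction.toRingEquiv G E g : E →+* E)] W where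
  toFun w := S.grp g • w
  invFun w := S.grp g⁻¹ • w
  map_add' := smul_add _
  map_smul' := S.grp_smul_smul hEW g
  left_inv w := by simp [smul_smul, ← map_mul]
  right_inv w := by simp [smul_smul, ← map_mul]

@[simp]
theorem grpSmulSemilinearEquiv_apply (hEW : ∀ (e : E) (w : W), e • w = S.emb e • w) (g : G)
    (w : W) : S.grpSmulSemilinearEquiv hEW g w = S.grp g • w := rfl

end SkewGroupRing

theorem multiplicity_function_galois_invariant_general
    (E G R : Type*) [Field E] [Group G] [MulSemiringAction G E]
    [Ring R] [Module E R] (S : SkewGroupRing E G R)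
    (N : Subgroup G) (hNorm : N.Normal)
    (F : Type*) [Field F]
    (Ω : Type*) [Field Ω] [Algebra F Ω] [Algebra E Ω]
    (W : Type*) [AddCommGroup W] [Module R W] [Module E W]
    (hEW : ∀ (e : E) (w : W), e • w = S.emb e • w)
    (T : ↥N → Module.End Ω (Ω ⊗[E] W))
    (hT : ∀ (n : ↥N) (c : Ω) (w : W), T n (c ⊗ₜ w) = c ⊗ₜ (S.grp ↑n • w))
    (bar : (Ω ≃ₐ[F] Ω) → G)
    (hbar : ∀ (g : Ω ≃ₐ[F] Ω) (e : E),
      g (algebraMap E Ω e) = algebraMap E Ω ((bar g) • e)) :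
    ∀ (g : Ω ≃ₐ[F] Ω) (χ χ' : ↥N →* Ωˣ),
      (∀ n : ↥N, ((χ' n : Ωˣ) : Ω) =
        g ((χ ⟨(bar g)⁻¹ * ↑n * bar g, hNorm.conj_mem' ↑n n.2 (bar g)⟩ : Ωˣ) : Ω)) →
      Module.finrank Ω ↥(⨅ n : ↥N, Module.End.eigenspace (T n) ((χ' n : Ωˣ) : Ω)) =
        Module.finrank Ω ↥(⨅ n : ↥N, Module.End.eigenspace (T n) ((χ n : Ωˣ) : Ω)) := by
  intro g χ χ' hχ'
  have := hNorm
  set h := bar g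
  set c := (MulAut.conjNormal (H := N) h)⁻¹ with hc
  let Φ := TensorProduct.semilinearCongr (g : Ω ≃+* Ω) (hbar g) (S.grpSmulSemilinearEquiv hEW h)
  have hΦT : ∀ n x, Φ (T (c n) x) = T n (Φ x) := fun n ↦
    TensorProduct.semilinearCongr_apply_comm _ _ _ (hT _) (hT n) fun w ↦ by
      simp only [SkewGroupRing.grpSmulSemilinearEquiv_apply, smul_smul, ← map_mul, hc,
        MulAut.conjNormal_inv_apply]
      group
  have hmem : ∀ x, Φ x ∈ ⨅ n : ↥N, Module.End.eigenspace (T n) ((χ' n : Ωˣ) : Ω) ↔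
      x ∈ ⨅ n : ↥N, Module.End.eigenspace (T n) ((χ n : Ωˣ) : Ω) := by
    intro x
    simp only [Submodule.mem_iInf]
    refine (forall_congr' fun n ↦ ?_).trans c.toEquiv.forall_congr_right
    have hcn : c n = ⟨h⁻¹ * n * h, hNorm.conj_mem' n n.2 h⟩ :=
      Subtype.ext (MulAut.conjNormal_inv_apply h n)
    rw [hχ' n, ← hcn]
    exact Φ.apply_mem_eigenspace_iff (hΦT n) _ x
  have hmap : (⨅ n : ↥N, Module.End.eigenspace (T n) ((χ n : Ωˣ) : Ω)).map Φ.toLinearMap =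
      ⨅ n : ↥N, Module.End.eigenspace (T n) ((χ' n : Ωˣ) : Ω) := by
    ext y
    rw [Submodule.mem_map_equiv, ← hmem, Φ.apply_symm_apply]
  rw [← hmap]
  exact (Φ.submoduleMap _).finrank_eq_of_semilinear.symm

/-- let `E` be a field with an action of a finite group `G` of order
invertible in `E`, with abelian kernel `N`, fixed field `F = E^G`, and a fixed
separable (algebraic) closure `Ω = F̄` of `F`.  For a finitely generated `E⟨G⟩`-module
`W`, write `Ω ⊗_E W ≅ ⊕_{χ ∈ N^∨} U_χ^{m_χ}`, i.e. let `m χ` be the dimension of the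
`χ`-eigenspace of the `N`-action on `Ω ⊗_E W`.  Then `ρ(W) = Σ m_χ · χ ∈ ℤ[N^∨]` is
invariant under the action of the absolute Galois group `G_F` on `ℤ[N^∨]` given by
`(g * χ)(n) = g(χ(ḡ⁻¹ n ḡ))`: for every `g ∈ G_F` the multiplicity of `g * χ` equals
that of `χ`. -/
theorem multiplicity_function_galois_invariant
    (E G R : Type*) [Field E] [Group G] [Fintype G] [MulSemiringAction G E]
    [Ring R] [Module E R] (S : SkewGroupRing E G R)
    (hcard : (Fintype.card G : E) ≠ 0)
    (N : Subgroup G) (hNorm : N.Normal)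
    (hNdef : N = (MulSemiringAction.toRingAut G E).ker)
    (hNab : ∀ a b : G, a ∈ N → b ∈ N → a * b = b * a)
    (F : Type*) [Field F] [Algebra F E]
    (hF : ∀ e : E, (∀ g : G, g • e = e) ↔ e ∈ (algebraMap F E).range)
    (Ω : Type*) [Field Ω] [IsAlgClosed Ω] [Algebra F Ω] [Algebra E Ω]
    [IsScalarTower F E Ω] [Algebra.IsAlgebraic F Ω]
    (W : Type*) [AddCommGroup W] [Module R W] [Module E W] [FiniteDimensional E W]
    (hEW : ∀ (e : E) (w : W), e • w = S.emb e • w)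
    (T : ↥N → Module.End Ω (Ω ⊗[E] W))
    (hT : ∀ (n : ↥N) (c : Ω) (w : W), T n (c ⊗ₜ w) = c ⊗ₜ (S.grp ↑n • w))
    (bar : (Ω ≃ₐ[F] Ω) → G)
    (hbar : ∀ (g : Ω ≃ₐ[F] Ω) (e : E),
      g (algebraMap E Ω e) = algebraMap E Ω ((bar g) • e)) :
    ∀ (g : Ω ≃ₐ[F] Ω) (χ χ' : ↥N →* Ωˣ),
      (∀ n : ↥N, ((χ' n : Ωˣ) : Ω) =
        g ((χ ⟨(bar g)⁻¹ * ↑n * bar g, hNorm.conj_mem' ↑n n.2 (bar g)⟩ : Ωˣ) : Ω)) →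
      Module.finrank Ω ↥(⨅ n : ↥N, Module.End.eigenspace (T n) ((χ' n : Ωˣ) : Ω)) =
        Module.finrank Ω ↥(⨅ n : ↥N, Module.End.eigenspace (T n) ((χ n : Ωˣ) : Ω)) :=
  multiplicity_function_galois_invariant_general E G R S N hNorm F Ω W hEW T hT bar hbar
end

section
/- Let G be a profinite group acting continuously on a field E. Then the category of continuous finite-dimensional E-semilinear representations of G is equivalent to the filtered colimit, over open normal subgroups G' of G, of the categories of E^{G'}-semilinear representations of G/G'; the structure functors are given by extension of scalars W ↦ E ⊗_{E^{G'}} W. -/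
/-!
Fix an `E`-basis `b` of `V`. By continuity its pointwise stabilizer is an open subgroup of the
compact group `G`, so it contains an open normal subgroup `G'`. Let `W` be the `G'`-invariants,
a module over `F' = E^{G'}`. A vector of `V` is `G'`-invariant exactly when its `b`-coordinates
are, so `W` is the `F'`-span of `b`, and `b` is both an `E`-basis of `V` and an `F'`-basis of `W`.
-/

/-- The multiplicative group structure (composition) on additive automorphisms, as
`AddAut.group` provided in the older Mathlib. -/
instance addEquivSelfGroupOld (A : Type*) [Add A] : Group (A ≃+ A) where
  mul g h := AddEquiv.trans h g
  one := AddEquiv.refl _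
  inv := AddEquiv.symm
  mul_assoc _ _ _ := rfl
  one_mul _ := rfl
  mul_one _ := rfl
  inv_mul_cancel := AddEquiv.self_trans_symm

open Module Submodule

namespace SemilinearRep

variable {G E V : Type*} [Group G] [AddCommGroup V] (ρ : G →* (V ≃+ V))

theorem map_mul_apply (g h : G) (v : V) : ρ (g * h) v = ρ g (ρ h v) := by
  rw [map_mul]; rfl

theorem map_one_apply (v : V) : ρ 1 v = v := by
  rw [map_one]; rfl

def fixingSubgroup (s : Set V) : Subgroup G where
  carrier := {g | ∀ v ∈ s, ρ g v = v}
  one_mem' _ _ := map_one_apply ρ _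
  mul_mem' {g h} hg hh v hv := by rw [map_mul_apply, hh v hv, hg v hv]
  inv_mem' {g} hg v hv := by
    conv_rhs => rw [← map_one_apply ρ v, ← inv_mul_cancel g, map_mul_apply, hg v hv]

theorem isOpen_fixingSubgroup [TopologicalSpace G] {s : Set V} (hs : s.Finite)
    (hcont : ∀ v : V, IsOpen {g : G | ρ g v = v}) : IsOpen (fixingSubgroup ρ s : Set G) := by
  have : (fixingSubgroup ρ s : Set G) = ⋂ v ∈ s, {g : G | ρ g v = v} := by
    ext g; simp [fixingSubgroup]
  rw [this]
  exact hs.isOpen_biInter fun v _ => hcont v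

variable [Field E] [MulSemiringAction G E] [Module E V]
  (hsemi : ∀ (g : G) (a : E) (v : V), ρ g (a • v) = (g • a) • ρ g v)

theorem mem_fixedPoints_subfield_iff (H : Subgroup G) (a : E) :
    a ∈ FixedPoints.subfield H E ↔ ∀ g ∈ H, g • a = a :=
  ⟨fun ha g hg => ha ⟨g, hg⟩, fun ha h => ha h h.2⟩

def invariants (H : Subgroup G) : Submodule (FixedPoints.subfield H E) V where
  carrier := {v | ∀ g ∈ H, ρ g v = v}
  add_mem' hu hv g hg := by rw [map_add, hu g hg, hv g hg]
  zero_mem' _ _ := map_zero _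
  smul_mem' c v hv g hg := by
    change ρ g ((c : E) • v) = (c : E) • v
    rw [hsemi, hv g hg, (mem_fixedPoints_subfield_iff H _).1 c.2 g hg]

theorem map_mem_invariants {H : Subgroup G} [H.Normal] (g : G) {w : V}
    (hw : w ∈ invariants ρ hsemi H) : ρ g w ∈ invariants ρ hsemi H := by
  intro h hh
  have hconj : g⁻¹ * h * g ∈ H := by simpa using Subgroup.Normal.conj_mem ‹_› h hh g⁻¹
  rw [← map_mul_apply, show h * g = g * (g⁻¹ * h * g) by group, map_mul_apply, hw _ hconj]

section Basis

variable {ι : Type*} (b : Basis ι E V) {H : Subgroup G}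
  (hb : H ≤ fixingSubgroup ρ (Set.range b))
include hb

theorem span_invariants_eq_top : span E (invariants ρ hsemi H : Set V) = ⊤ := by
  rw [eq_top_iff, ← b.span_eq]
  exact span_mono <| Set.range_subset_iff.2 fun i g hg => hb hg (b i) ⟨i, rfl⟩

variable [Fintype ι]
include hsemi

theorem repr_map_of_le_fixingSubgroup {g : G} (hg : g ∈ H) (v : V) (i : ι) :
    b.repr (ρ g v) i = g • b.repr v i := by
  conv_lhs => rw [← b.sum_repr v, map_sum]
  simp_rw [hsemi, hb hg (b _) ⟨_, rfl⟩, b.repr_sum_self]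

theorem mem_invariants_iff_repr_mem (v : V) :
    v ∈ invariants ρ hsemi H ↔ ∀ i, b.repr v i ∈ FixedPoints.subfield H E := by
  simp_rw [mem_fixedPoints_subfield_iff]
  refine ⟨fun hv i g hg => ?_, fun hv g hg => b.ext_elem fun i => ?_⟩
  · rw [← repr_map_of_le_fixingSubgroup ρ hsemi b hb hg, hv g hg]
  · rw [repr_map_of_le_fixingSubgroup ρ hsemi b hb hg, hv i g hg]

theorem invariants_eq_span :
    invariants ρ hsemi H = span (FixedPoints.subfield H E) (Set.range b) := by
  ext v
  rw [b.mem_span_iff_repr_mem (FixedPoints.subfield H E), mem_invariants_iff_repr_mem ρ hsemi b hb]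
  exact forall_congr' fun i => ⟨fun h => ⟨⟨_, h⟩, rfl⟩, by rintro ⟨c, hc⟩; exact hc ▸ c.2⟩

theorem finrank_invariants :
    finrank (FixedPoints.subfield H E) (invariants ρ hsemi H) = finrank E V := by
  rw [invariants_eq_span ρ hsemi b hb, finrank_eq_card_basis (b.restrictScalars _),
    finrank_eq_card_basis b]

end Basis

end SemilinearRep

open SemilinearRep in
theorem semilinear_rep_extended_from_finite_level_general
    (E G : Type*) [Field E] [Group G] [TopologicalSpace G] [IsTopologicalGroup G]
    [CompactSpace G] [MulSemiringAction G E]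
    (V : Type*) [AddCommGroup V] [Module E V] [FiniteDimensional E V]
    (ρ : G →* (V ≃+ V))
    (hsemi : ∀ (g : G) (a : E) (v : V), ρ g (a • v) = (g • a) • ρ g v)
    (hcontV : ∀ v : V, IsOpen {g : G | ρ g v = v}) :
    ∃ G' : Subgroup G, G'.Normal ∧ IsOpen (G' : Set G) ∧
      ∃ F' : Subfield E, (∀ a : E, a ∈ F' ↔ ∀ g ∈ G', g • a = a) ∧
        ∃ W : Submodule F' V,
          (∀ g : G, ∀ w ∈ W, ρ g w ∈ W) ∧
          (∀ g ∈ G', ∀ w ∈ W, ρ g w = w) ∧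
          Submodule.span E (W : Set V) = ⊤ ∧
          Module.finrank F' W = Module.finrank E V := by
  let b := Module.finBasis E V
  have hopen := isOpen_fixingSubgroup ρ (Set.finite_range b) hcontV
  obtain ⟨N, hN⟩ := IsTopologicalGroup.exist_openNormalSubgroup_sub_clopen_nhds_of_one
    ⟨Subgroup.isClosed_of_isOpen _ hopen, hopen⟩ (one_mem _)
  have hb : N.toSubgroup ≤ fixingSubgroup ρ (Set.range b) := hN
  refine ⟨N, N.isNormal', N.isOpen', FixedPoints.subfield N.toSubgroup E,
    mem_fixedPoints_subfield_iff N.toSubgroup, invariants ρ hsemi N.toSubgroup, ?_, ?_, ?_, ?_⟩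
  · exact fun g _ => map_mem_invariants ρ hsemi g
  · exact fun _ hg _ hw => hw _ hg
  · exact span_invariants_eq_top ρ hsemi b hb
  · exact finrank_invariants ρ hsemi b hb

/-- let `G` be a profinite group acting continuously on a field `E`.
Then the category of continuous finite-dimensional `E`-semilinear representations of
`G` is the filtered colimit, over open normal subgroups `G'` of `G`, of the categories
of `E^{G'}`-semilinear representations of `G/G'`, with structure functors the extension
of scalars `W ↦ E ⊗_{E^{G'}} W`.  Concretely: every continuous finite-dimensional
semilinear representation `(V, ρ)` of `G` is extended from a finite level, i.e. there
are an open normal subgroup `G' ≤ G`, the fixed subfield `F' = E^{G'}`, and a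
`G`-stable `F'`-subspace `W` of `V` on which `G'` acts trivially (so `G/G'` acts
`F'`-semilinearly on `W`) such that the natural map `E ⊗_{F'} W → V` is an isomorphism
(`W` spans `V` over `E` and `dim_{F'} W = dim_E V`). -/
theorem semilinear_rep_extended_from_finite_level
    (E G : Type*) [Field E] [Group G] [TopologicalSpace G] [IsTopologicalGroup G]
    [CompactSpace G] [TotallyDisconnectedSpace G] [T2Space G]
    [MulSemiringAction G E] (hcontE : ∀ e : E, IsOpen {g : G | g • e = e})
    (V : Type*) [AddCommGroup V] [Module E V] [FiniteDimensional E V]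
    (ρ : G →* (V ≃+ V))
    (hsemi : ∀ (g : G) (a : E) (v : V), ρ g (a • v) = (g • a) • ρ g v)
    (hcontV : ∀ v : V, IsOpen {g : G | ρ g v = v}) :
    ∃ G' : Subgroup G, G'.Normal ∧ IsOpen (G' : Set G) ∧
      ∃ F' : Subfield E, (∀ a : E, a ∈ F' ↔ ∀ g ∈ G', g • a = a) ∧
        ∃ W : Submodule F' V,
          (∀ g : G, ∀ w ∈ W, ρ g w ∈ W) ∧
          (∀ g ∈ G', ∀ w ∈ W, ρ g w = w) ∧
          Submodule.span E (W : Set V) = ⊤ ∧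
          Module.finrank F' W = Module.finrank E V :=
  semilinear_rep_extended_from_finite_level_general E G V ρ hsemi hcontV
end
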